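/- Let s ≥ 1 and 0 ≤ j ≤ s−1 be integers and let p be an (s,j)-Hermite polynomial. Then there exists a real polynomial g of degree at most s−1 all of whose coefficients are nonnegative such that p(x) = g(x)·(1−x)^s for all x ∈ ℝ. -/

import Mathlib

/-!
The conditions at `1` say that `p` vanishes to order `s` there, so `p = (1 - X)^s * g`, and the
degree bound on `p` leaves `deg g ≤ s - 1`. The conditions at `0` say that the first `s`
coefficients of `p` are `δ_{j,k} / k!`, hence nonnegative. Dividing by `1 - X` replaces the
coefficients by their partial sums, which keeps the first `s` of them nonnegative; the remaining
coefficients of `g` vanish by the degree bound.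
-/

/-- A real polynomial `p` is an `(s,j)`-Hermite polynomial if `deg p ≤ 2s-1` and, for
every `0 ≤ k ≤ s-1`, `p⁽ᵏ⁾(0) = δ_{j,k}` and `p⁽ᵏ⁾(1) = 0`. -/
def IsHermitePoly (s j : ℕ) (p : Polynomial ℝ) : Prop :=
  p.natDegree ≤ 2 * s - 1 ∧
    ∀ k < s, (Polynomial.derivative^[k] p).eval 0 = (if j = k then (1 : ℝ) else 0) ∧
      (Polynomial.derivative^[k] p).eval 1 = 0

/-- A real polynomial `q` is an `(s,j)`-dual Hermite polynomial if `deg q ≤ 2s-1` and, for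
every `0 ≤ k ≤ s-1`, `q⁽ᵏ⁾(0) = 0` and `q⁽ᵏ⁾(1) = δ_{j,k}`. -/
def IsDualHermitePoly (s j : ℕ) (q : Polynomial ℝ) : Prop :=
  q.natDegree ≤ 2 * s - 1 ∧
    ∀ k < s, (Polynomial.derivative^[k] q).eval 0 = 0 ∧
      (Polynomial.derivative^[k] q).eval 1 = (if j = k then (1 : ℝ) else 0)

open Polynomial

namespace Polynomial

theorem iterate_derivative_eval_zero {R : Type*} [Semiring R] (p : R[X]) (k : ℕ) :
    (derivative^[k] p).eval 0 = k.factorial * p.coeff k := by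
  rw [← coeff_zero_eq_eval_zero, coeff_iterate_derivative, zero_add, Nat.descFactorial_self,
    nsmul_eq_mul]

theorem X_sub_C_pow_dvd_of_iterate_derivative_eval_eq_zero {R : Type*} [CommRing R]
    [NoZeroDivisors R] [CharZero R] {p : R[X]} {a : R} {n : ℕ}
    (h : ∀ k < n, (derivative^[k] p).eval a = 0) : (X - C a) ^ n ∣ p := by
  rcases eq_or_ne p 0 with rfl | hp
  · exact dvd_zero _
  rw [← le_rootMultiplicity_iff hp]
  rcases n with _ | n
  · exact Nat.zero_le _
  exact (lt_rootMultiplicity_iff_isRoot_iterate_derivative hp).2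
    fun m hm => h m (Nat.lt_succ_of_le hm)

theorem natDegree_one_sub_X_pow_mul {R : Type*} [CommRing R] [IsDomain R] {g : R[X]}
    (hg : g ≠ 0) (s : ℕ) : ((1 - X) ^ s * g).natDegree = s + g.natDegree := by
  have h : (1 - X : R[X]).natDegree = 1 := by
    rw [← neg_sub, natDegree_neg, ← C_1, natDegree_X_sub_C]
  rw [natDegree_mul (pow_ne_zero _ (by rintro h'; simp [h'] at h)) hg, natDegree_pow, h, mul_one]

variable {R : Type*} [CommRing R] [PartialOrder R] [IsOrderedAddMonoid R]

theorem coeff_nonneg_of_one_sub_X_mul {g : R[X]} {n : ℕ}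
    (h : ∀ k < n, 0 ≤ ((1 - X) * g).coeff k) : ∀ k < n, 0 ≤ g.coeff k := by
  intro k hk
  induction k with
  | zero => simpa using h 0 hk
  | succ k ih =>
    have hstep : g.coeff (k + 1) = ((1 - X) * g).coeff (k + 1) + g.coeff k := by
      rw [sub_mul, one_mul, coeff_sub, coeff_X_mul, sub_add_cancel]
    rw [hstep]
    exact add_nonneg (h _ hk) (ih (by omega))

theorem coeff_nonneg_of_one_sub_X_pow_mul {g : R[X]} {n : ℕ} (s : ℕ)
    (h : ∀ k < n, 0 ≤ ((1 - X) ^ s * g).coeff k) : ∀ k < n, 0 ≤ g.coeff k := by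
  induction s generalizing g with
  | zero => simpa using h
  | succ s ih =>
    refine coeff_nonneg_of_one_sub_X_mul (ih ?_)
    rwa [← mul_assoc, ← pow_succ]

end Polynomial

namespace IsHermitePoly

variable {s j : ℕ} {p : ℝ[X]}

theorem coeff_nonneg (hp : IsHermitePoly s j p) : ∀ k < s, 0 ≤ p.coeff k := by
  intro k hk
  have h := (hp.2 k hk).1
  rw [iterate_derivative_eval_zero] at h
  refine nonneg_of_mul_nonneg_right (a := (k.factorial : ℝ)) ?_ (by positivity)
  rw [h]
  split_ifs <;> norm_num

theorem one_sub_X_pow_dvd (hp : IsHermitePoly s j p) : (1 - X) ^ s ∣ p :=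
  dvd_trans (pow_dvd_pow_of_dvd ⟨-1, by simp⟩ s)
    (X_sub_C_pow_dvd_of_iterate_derivative_eval_eq_zero fun k hk => (hp.2 k hk).2)

end IsHermitePoly

theorem hermitePoly_factorization_general (s j : ℕ) (hs : 1 ≤ s)
    (p : Polynomial ℝ) (hp : IsHermitePoly s j p) :
    ∃ g : Polynomial ℝ, g.natDegree ≤ s - 1 ∧ (∀ k : ℕ, 0 ≤ g.coeff k) ∧
      ∀ x : ℝ, p.eval x = g.eval x * (1 - x) ^ s := by
  obtain ⟨g, rfl⟩ := hp.one_sub_X_pow_dvd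
  have hdeg : g.natDegree ≤ s - 1 := by
    rcases eq_or_ne g 0 with rfl | hg
    · simp
    have hpdeg := hp.1
    rw [natDegree_one_sub_X_pow_mul hg] at hpdeg
    omega
  refine ⟨g, hdeg, fun k => ?_, fun x => by simp [mul_comm]⟩
  by_cases hk : k < s
  · exact coeff_nonneg_of_one_sub_X_pow_mul s hp.coeff_nonneg k hk
  · rw [coeff_eq_zero_of_natDegree_lt (by omega)]

/-- an `(s,j)`-Hermite polynomial factors as `p(x) = g(x)(1-x)^s` with `g`
a polynomial of degree at most `s-1` with nonnegative coefficients. -/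
theorem hermitePoly_factorization (s j : ℕ) (hs : 1 ≤ s) (hj : j ≤ s - 1)
    (p : Polynomial ℝ) (hp : IsHermitePoly s j p) :
    ∃ g : Polynomial ℝ, g.natDegree ≤ s - 1 ∧ (∀ k : ℕ, 0 ≤ g.coeff k) ∧
      ∀ x : ℝ, p.eval x = g.eval x * (1 - x) ^ s :=
  hermitePoly_factorization_general s j hs p hp
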